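/- arXiv:1703.09753 — 2 statements merged into one kernel-verified Lean document; each statement's English description precedes it below -/
import Mathlib

section
/- Let ξ be a continuous solution of ξ ∘ f = f ∘ ξ for the tent map f. Then the slopes of all secants of ξ over dyadic intervals are uniformly bounded: there exists t such that for all n and all 0 ≤ k < 2^n, |2^n (ξ((k+1)/2^n) - ξ(k/2^n))| < t. -/
/-!
Pick `s` with `|x - y| ≤ 2⁻ˢ → |ξ x - ξ y| < 1` (uniform continuity). If the secant over a dyadic
interval `I` of length `2⁻ⁿ`, `n = T + s`, had `2ⁿ |Δξ| ≥ 2ˢ⁺¹`, then `ξ(I)` would contain two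
consecutive points `j/2ᵀ, (j+1)/2ᵀ`, which `tentᵀ` sends to `0` and `1` (in some order). Since
`ξ ∘ tentᵀ = tentᵀ ∘ ξ`, the set `tentᵀ(I)` would then contain points where `ξ` takes the values
`0` and `1`; but `tentᵀ` is `2ᵀ`-Lipschitz, so `tentᵀ(I)` has diameter at most `2⁻ˢ`.
-/

noncomputable def tent (x : ℝ) : ℝ := 1 - |2 * x - 1|

open Set Function

lemma tent_of_le_half {x : ℝ} (hx : x ≤ 1 / 2) : tent x = 2 * x := by
  rw [tent, abs_of_nonpos (by linarith)]; ring

lemma tent_of_half_le {x : ℝ} (hx : 1 / 2 ≤ x) : tent x = 2 - 2 * x := by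
  rw [tent, abs_of_nonneg (by linarith)]; ring

lemma mapsTo_tent : MapsTo tent (Icc 0 1) (Icc 0 1) := by
  intro x ⟨hx0, hx1⟩
  have h : |2 * x - 1| ≤ 1 := abs_le.mpr ⟨by linarith, by linarith⟩
  exact ⟨by rw [tent]; linarith, by rw [tent]; linarith [abs_nonneg (2 * x - 1)]⟩

lemma lipschitzWith_tent : LipschitzWith 2 tent := by
  refine LipschitzWith.of_dist_le_mul fun x y => ?_
  calc dist (tent x) (tent y) = abs (|2 * y - 1| - |2 * x - 1|) := by
        rw [Real.dist_eq, tent, tent]; ring_nf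
    _ ≤ |(2 * y - 1) - (2 * x - 1)| := abs_abs_sub_abs_le_abs_sub _ _
    _ = 2 * dist x y := by
        rw [Real.dist_eq, abs_sub_comm, ← abs_two, ← abs_mul]; ring_nf

lemma tent_iterate_natCast_div_two_pow (T j : ℕ) (hj : j ≤ 2 ^ T) :
    tent^[T] (j / 2 ^ T) = (j % 2 : ℕ) := by
  induction T generalizing j with
  | zero =>
    interval_cases j <;> simp
  | succ T ih =>
    rw [pow_succ] at hj
    have hj' : (j : ℝ) ≤ 2 * 2 ^ T := by exact_mod_cast (by omega : j ≤ 2 * 2 ^ T)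
    obtain ⟨i, hiT, hij, hi⟩ :
        ∃ i ≤ 2 ^ T, i % 2 = j % 2 ∧ tent (j / 2 ^ (T + 1)) = i / 2 ^ T := by
      rcases le_or_gt j (2 ^ T) with hjT | hjT
      · have : (j : ℝ) ≤ 2 ^ T := by exact_mod_cast hjT
        refine ⟨j, hjT, rfl, ?_⟩
        rw [tent_of_le_half (by rw [div_le_iff₀ (by positivity), pow_succ]; linarith)]
        field_simp; ring
      · have : (2 : ℝ) ^ T < j := by exact_mod_cast hjT
        refine ⟨2 * 2 ^ T - j, by omega, by omega, ?_⟩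
        rw [tent_of_half_le (by rw [le_div_iff₀ (by positivity), pow_succ]; linarith),
          Nat.cast_sub (by exact_mod_cast hj')]
        push_cast
        field_simp; ring
    rw [iterate_succ_apply, hi, ih i hiT, hij]

lemma iterate_commute_of_mapsTo {α : Type*} {f g : α → α} {s : Set α} (hf : MapsTo f s s)
    (hfg : ∀ x ∈ s, g (f x) = f (g x)) (n : ℕ) : ∀ x ∈ s, g (f^[n] x) = f^[n] (g x) := by
  induction n with
  | zero => simp
  | succ n ih =>
    intro x hx
    rw [iterate_succ_apply, iterate_succ_apply, ih (f x) (hf hx), hfg x hx]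

lemma exists_consecutive_natCast_div_mem_Icc {a b : ℝ} {N : ℕ} (ha : 0 ≤ a) (hb : b ≤ 1)
    (hab : 2 ≤ N * (b - a)) : ∃ j : ℕ, j + 1 ≤ N ∧ a ≤ j / N ∧ ((j + 1 : ℕ) : ℝ) / N ≤ b := by
  have hN : (0 : ℝ) < N := by nlinarith
  refine ⟨⌈a * N⌉₊, ?_, ?_, ?_⟩
  · have := Nat.ceil_lt_add_one (mul_nonneg ha hN.le)
    exact_mod_cast (show ((⌈a * N⌉₊ + 1 : ℕ) : ℝ) ≤ N by push_cast; nlinarith)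
  · rw [le_div_iff₀ hN]; exact Nat.le_ceil _
  · have := Nat.ceil_lt_add_one (mul_nonneg ha hN.le)
    rw [div_le_iff₀ hN]; push_cast; nlinarith

lemma two_pow_mul_abs_sub_lt_two {ξ : ℝ → ℝ} {s : ℕ}
    (hcont : ContinuousOn ξ (Icc 0 1)) (hmaps : MapsTo ξ (Icc 0 1) (Icc 0 1))
    (hcomm : ∀ x ∈ Icc (0 : ℝ) 1, ξ (tent x) = tent (ξ x))
    (hs : ∀ x ∈ Icc (0 : ℝ) 1, ∀ y ∈ Icc (0 : ℝ) 1, dist x y ≤ 1 / 2 ^ s → dist (ξ x) (ξ y) < 1)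
    {p q : ℝ} (hp : 0 ≤ p) (hpq : p ≤ q) (hq : q ≤ 1) (T : ℕ)
    (hT : 2 ^ T * (q - p) ≤ 1 / 2 ^ s) :
    2 ^ T * |ξ q - ξ p| < 2 := by
  have hI : Icc p q ⊆ Icc 0 1 := Icc_subset_Icc hp hq
  have hξp := hmaps (hI (left_mem_Icc.mpr hpq))
  have hξq := hmaps (hI (right_mem_Icc.mpr hpq))
  by_contra! hbig
  obtain ⟨j, hjT, hja, hjb⟩ := exists_consecutive_natCast_div_mem_Icc (N := 2 ^ T)
    (le_min hξp.1 hξq.1) (max_le hξp.2 hξq.2)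
    (by rwa [max_sub_min_eq_abs, Nat.cast_pow, Nat.cast_two])
  simp only [Nat.cast_pow, Nat.cast_two] at hja hjb
  have hIVT : uIcc (ξ p) (ξ q) ⊆ ξ '' Icc p q :=
    uIcc_of_le hpq ▸ intermediate_value_uIcc (hcont.mono (uIcc_of_le hpq ▸ hI))
  have hstep : (j : ℝ) / 2 ^ T ≤ ((j + 1 : ℕ) : ℝ) / 2 ^ T := by gcongr; linarith
  obtain ⟨x, hx, hξx⟩ := hIVT ⟨hja, hstep.trans hjb⟩
  obtain ⟨y, hy, hξy⟩ := hIVT ⟨hja.trans hstep, hjb⟩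
  have hclose : dist (tent^[T] x) (tent^[T] y) ≤ 1 / 2 ^ s := calc
    _ ≤ 2 ^ T * dist x y := by
      simpa using (lipschitzWith_tent.iterate T).dist_le_mul x y
    _ ≤ 2 ^ T * (q - p) := by gcongr; exact Real.dist_le_of_mem_Icc hx hy
    _ ≤ 1 / 2 ^ s := hT
  have hfar := hs _ (mapsTo_tent.iterate T (hI hx)) _ (mapsTo_tent.iterate T (hI hy)) hclose
  rw [iterate_commute_of_mapsTo mapsTo_tent hcomm T x (hI hx),
    iterate_commute_of_mapsTo mapsTo_tent hcomm T y (hI hy), hξx, hξy,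
    tent_iterate_natCast_div_two_pow T j (by omega), tent_iterate_natCast_div_two_pow T _ hjT,
    Real.dist_eq] at hfar
  rcases Nat.mod_two_eq_zero_or_one j with h | h <;>
    simp [h, Nat.succ_mod_two_eq_one_iff.mpr, Nat.succ_mod_two_eq_zero_iff.mpr] at hfar

theorem secant_slopes_bounded (ξ : ℝ → ℝ)
    (hcont : ContinuousOn ξ (Set.Icc 0 1))
    (hmaps : Set.MapsTo ξ (Set.Icc 0 1) (Set.Icc 0 1))
    (hcomm : ∀ x ∈ Set.Icc (0:ℝ) 1, ξ (tent x) = tent (ξ x)) :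
    ∃ t : ℝ, ∀ n : ℕ, ∀ k : ℕ, k < 2 ^ n →
      |(2 : ℝ) ^ n * (ξ (((k : ℝ) + 1) / 2 ^ n) - ξ ((k : ℝ) / 2 ^ n))| < t := by
  obtain ⟨δ, hδ, hξδ⟩ := Metric.uniformContinuousOn_iff.mp
    (isCompact_Icc.uniformContinuousOn_of_continuous hcont) 1 one_pos
  obtain ⟨s, hsδ⟩ := exists_pow_lt_of_lt_one hδ (by norm_num : (1 / 2 : ℝ) < 1)
  have hs : ∀ x ∈ Icc (0 : ℝ) 1, ∀ y ∈ Icc (0 : ℝ) 1, dist x y ≤ 1 / 2 ^ s →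
      dist (ξ x) (ξ y) < 1 := fun x hx y hy hxy =>
    hξδ x hx y hy (hxy.trans_lt (by rwa [← one_div_pow]))
  refine ⟨2 ^ (s + 1), fun n k hk => ?_⟩
  have hk' : (k : ℝ) + 1 ≤ 2 ^ n := by exact_mod_cast hk
  have hp : (0 : ℝ) ≤ k / 2 ^ n := by positivity
  have hpq : (k : ℝ) / 2 ^ n ≤ (k + 1) / 2 ^ n := by gcongr; linarith
  have hq : ((k : ℝ) + 1) / 2 ^ n ≤ 1 := div_le_one_of_le₀ hk' (by positivity)
  rw [abs_mul, abs_of_pos (by positivity)]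
  rcases le_or_gt n s with hns | hsn
  · have hle : |ξ ((k + 1) / 2 ^ n) - ξ (k / 2 ^ n)| ≤ 1 :=
      Real.dist_le_of_mem_Icc_01 (hmaps ⟨hp.trans hpq, hq⟩) (hmaps ⟨hp, hpq.trans hq⟩)
    calc (2 : ℝ) ^ n * |ξ ((k + 1) / 2 ^ n) - ξ (k / 2 ^ n)| ≤ 2 ^ s * 1 := by
          gcongr; norm_num
      _ < 2 ^ (s + 1) := by rw [pow_succ]; linarith [pow_pos (two_pos : (0 : ℝ) < 2) s]
  · obtain ⟨T, rfl⟩ := Nat.exists_eq_add_of_le hsn.le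
    have hslope := two_pow_mul_abs_sub_lt_two hcont hmaps hcomm hs hp hpq hq T
      (le_of_eq (by field_simp; ring))
    calc (2 : ℝ) ^ (s + T) * |ξ ((k + 1) / 2 ^ (s + T)) - ξ (k / 2 ^ (s + T))|
        = 2 ^ s * (2 ^ T * |ξ ((k + 1) / 2 ^ (s + T)) - ξ (k / 2 ^ (s + T))|) := by ring
      _ < 2 ^ s * 2 := by gcongr
      _ = 2 ^ (s + 1) := by ring
end

section
/- Let ψ : A_n → [0,1] satisfy ψ ∘ f = f ∘ ψ on A_n and set x₀ = ψ(0) ∈ {0, 2/3}. Then for every 1 ≤ m ≤ n and every x ∈ A_m there exist i_1, ..., i_m ∈ {0,1} with ψ(x) = φ_{i_m}^{-1}(...(φ_{i_1}^{-1}(x₀))...). -/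
noncomputable def A (n : ℕ) : Set ℝ :=
  {x : ℝ | x ∈ Set.Icc (0:ℝ) 1 ∧ tent^[n] x = 0}

noncomputable def invBranch (b : Bool) (y : ℝ) : ℝ := if b then 1 - y / 2 else y / 2

/-- iterFrom x₀ i m = φ_{i_m}⁻¹(...(φ_{i_1}⁻¹(x₀))...), where i_r = i (r-1). -/
noncomputable def iterFrom (x₀ : ℝ) (i : ℕ → Bool) : ℕ → ℝ
  | 0 => x₀
  | m + 1 => invBranch (i m) (iterFrom x₀ i m)

lemma tent_zero : tent 0 = 0 := by
  simp [tent, abs_of_nonpos]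

lemma tent_mem {x : ℝ} (hx : x ∈ Set.Icc (0:ℝ) 1) : tent x ∈ Set.Icc (0:ℝ) 1 := by
  obtain ⟨h0, h1⟩ := hx
  constructor
  · have : |2 * x - 1| ≤ 1 := by rw [abs_le]; constructor <;> linarith
    simp only [tent]; linarith
  · have : 0 ≤ |2 * x - 1| := abs_nonneg _
    simp only [tent]; linarith

lemma z_eq_invBranch {z : ℝ} (hz : z ∈ Set.Icc (0:ℝ) 1) :
    z = invBranch (decide ((1:ℝ)/2 < z)) (tent z) := by
  obtain ⟨h0, h1⟩ := hz
  by_cases h : (1:ℝ)/2 < z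
  · have habs : |2 * z - 1| = 2 * z - 1 := abs_of_nonneg (by linarith)
    simp only [invBranch, tent, habs, decide_eq_true_eq]
    rw [if_pos h]; ring
  · have habs : |2 * z - 1| = -(2 * z - 1) := abs_of_nonpos (by linarith)
    simp only [invBranch, tent, habs, decide_eq_true_eq]
    rw [if_neg h]; ring

lemma iterFrom_congr (x₀ : ℝ) (i j : ℕ → Bool) :
    ∀ m, (∀ k < m, i k = j k) → iterFrom x₀ i m = iterFrom x₀ j m := by
  intro m
  induction m with
  | zero => intro _; rfl
  | succ m ih =>
    intro h
    simp only [iterFrom, h m (Nat.lt_succ_self m),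
      ih (fun k hk => h k (Nat.lt_succ_of_lt hk))]

lemma repr_lemma : ∀ m : ℕ, ∀ z ∈ Set.Icc (0:ℝ) 1,
    ∃ i : ℕ → Bool, z = iterFrom (tent^[m] z) i m := by
  intro m
  induction m with
  | zero => intro z _; exact ⟨fun _ => false, rfl⟩
  | succ m ih =>
    intro z hz
    obtain ⟨j, hj⟩ := ih (tent z) (tent_mem hz)
    set b := decide ((1:ℝ)/2 < z) with hb
    refine ⟨fun k => if k = m then b else j k, ?_⟩
    have hiter : tent^[m+1] z = tent^[m] (tent z) := Function.iterate_succ_apply tent m z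
    have hcongr : iterFrom (tent^[m+1] z) (fun k => if k = m then b else j k) m
        = iterFrom (tent^[m] (tent z)) j m := by
      rw [hiter]
      exact iterFrom_congr _ _ _ m (fun k hk => by simp [Nat.ne_of_lt hk])
    show z = invBranch _ _
    simp only [if_pos rfl, hcongr, ← hj]
    exact z_eq_invBranch hz

theorem psi_values_are_branch_points (n : ℕ) (hn : 1 ≤ n) (ψ : ℝ → ℝ)
    (hmaps : Set.MapsTo ψ (A n) (Set.Icc 0 1))
    (hcomm : ∀ x ∈ A n, ψ (tent x) = tent (ψ x)) :
    ∀ m : ℕ, 1 ≤ m → m ≤ n → ∀ x ∈ A m,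
      ∃ i : ℕ → Bool, ψ x = iterFrom (ψ 0) i m := by
  have tent_zero_iter : ∀ k : ℕ, tent^[k] (0:ℝ) = 0 := by
    intro k; induction k with
    | zero => rfl
    | succ k ih => rw [Function.iterate_succ_apply', ih, tent_zero]
  have hAmap : ∀ x ∈ A n, tent x ∈ A n := by
    rintro x ⟨hx1, hx2⟩
    exact ⟨tent_mem hx1, by rw [← Function.iterate_succ_apply, Function.iterate_succ_apply', hx2, tent_zero]⟩
  have hiterA : ∀ k : ℕ, ∀ x ∈ A n, tent^[k] x ∈ A n := by
    intro k
    induction k with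
    | zero => intro x hx; exact hx
    | succ k ih =>
      intro x hx
      rw [Function.iterate_succ_apply']
      exact hAmap _ (ih x hx)
  have hcommIter : ∀ k : ℕ, ∀ x ∈ A n, ψ (tent^[k] x) = tent^[k] (ψ x) := by
    intro k
    induction k with
    | zero => intro x _; rfl
    | succ k ih =>
      intro x hx
      rw [Function.iterate_succ_apply', Function.iterate_succ_apply',
        hcomm _ (hiterA k x hx), ih x hx]
  intro m _ hmn x hx
  obtain ⟨hx1, hx2⟩ := hx
  have hxAn : x ∈ A n := by
    refine ⟨hx1, ?_⟩
    obtain ⟨d, rfl⟩ := Nat.exists_eq_add_of_le hmn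
    rw [Nat.add_comm, Function.iterate_add_apply, hx2, tent_zero_iter]
  have hψx : ψ x ∈ Set.Icc (0:ℝ) 1 := hmaps hxAn
  obtain ⟨i, hi⟩ := repr_lemma m (ψ x) hψx
  refine ⟨i, ?_⟩
  rw [hi, ← hcommIter m x hxAn, hx2]
end
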